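/- Let h(Ã,B) = sup_{F ∈ ℝ^{d×d}} [Ã:F + (1/(2(G+L/2))) B:(G FFᵀF + (L/2)|F|²F) − (1/4)|FᵀF|²]. If |B|³ ≤ (27/8³)|Ã|, then h(Ã,B) ≥ (3/16)(|Ã|^{4/3} + |B|⁴). -/

import Mathlib

open Matrix

noncomputable def frob {d : ℕ} (F : Matrix (Fin d) (Fin d) ℝ) : ℝ :=
  Real.sqrt (∑ i, ∑ j, (F i j) ^ 2)

noncomputable def mdot {d : ℕ} (A B : Matrix (Fin d) (Fin d) ℝ) : ℝ :=
  ∑ i, ∑ j, A i j * B i j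

/-- The reduced Saint Venant–Kirchhoff dual function h(Ã, B). -/
noncomputable def svkh (G L : ℝ) {d : ℕ} (At B : Matrix (Fin d) (Fin d) ℝ) : ℝ :=
  sSup { z | ∃ F : Matrix (Fin d) (Fin d) ℝ,
    z = mdot At F
        + (1 / (2 * (G + L / 2))) * mdot B (G • (F * Fᵀ * F) + ((L / 2) * frob F ^ 2) • F)
        - (1/4) * frob (Fᵀ * F) ^ 2 }

/-
Take F = |Ã|^{-2/3} Ã, so that Ã : F = |Ã|^{4/3} = u⁴ with u = |F| = |Ã|^{1/3}, and |FᵀF|² ≤ u⁴.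
The stress X = G FFᵀF + (L/2)|F|²F satisfies |X| ≤ (G + L/2)|F|³, so the coupling term is at
least -|B|u³/2 and the value at F is at least (3/4)u⁴ - |B|u³/2, which exceeds
(3/16)(u⁴ + |B|⁴) once |B| ≤ 3u/8. The supremum is finite because |F|⁴ ≤ d |FᵀF|² makes the
quartic term dominate.
-/

theorem exists_add_cubic_sub_quartic_le {α β γ : ℝ} (hα : 0 ≤ α) (hβ : 0 ≤ β) (hγ : 0 < γ) :
    ∃ M, ∀ s, 0 ≤ s → α * s + β * s ^ 3 - γ * s ^ 4 ≤ M := by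
  set T := max 1 ((α + β) / γ)
  have hT1 : 1 ≤ T := le_max_left _ _
  have hTγ : α + β ≤ γ * T := by
    rw [← div_le_iff₀' hγ]; exact le_max_right _ _
  refine ⟨α * T + β * T ^ 3, fun s hs => ?_⟩
  rcases le_or_gt s T with hsT | hTs
  · have h1 : α * s ≤ α * T := by gcongr
    have h3 : β * s ^ 3 ≤ β * T ^ 3 := by gcongr
    nlinarith [pow_nonneg hs 4]
  · have hs1 : 1 ≤ s := hT1.trans hTs.le
    have hs3 : s ≤ s ^ 3 := by
      nlinarith [mul_nonneg (mul_nonneg hs (sub_nonneg.2 hs1)) (by linarith : 0 ≤ s + 1)]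
    have : α * s + β * s ^ 3 ≤ γ * s ^ 4 := by
      calc α * s + β * s ^ 3 ≤ (α + β) * s ^ 3 := by nlinarith
        _ ≤ γ * T * s ^ 3 := by gcongr
        _ ≤ γ * s ^ 4 := by rw [pow_succ _ 3, mul_comm (s ^ 3) s, ← mul_assoc]; gcongr
    have : 0 ≤ α * T + β * T ^ 3 := by positivity
    linarith

section Frobenius

attribute [local instance] Matrix.frobeniusNormedAddCommGroup Matrix.frobeniusNormedSpace

variable {d : ℕ}

theorem frob_eq_norm (F : Matrix (Fin d) (Fin d) ℝ) : frob F = ‖F‖ := by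
  simp [frob, Matrix.frobenius_norm_def, Real.sqrt_eq_rpow]

theorem mdot_eq_inner (A B : Matrix (Fin d) (Fin d) ℝ) :
    mdot A B = inner ℝ (WithLp.toLp 2 fun i => WithLp.toLp 2 (A i))
      (WithLp.toLp 2 fun i => WithLp.toLp 2 (B i)) := by
  simp [mdot, PiLp.inner_apply, mul_comm]

theorem abs_mdot_le (A B : Matrix (Fin d) (Fin d) ℝ) : |mdot A B| ≤ ‖A‖ * ‖B‖ :=
  mdot_eq_inner A B ▸ abs_real_inner_le_norm _ _

theorem mdot_self (F : Matrix (Fin d) (Fin d) ℝ) : mdot F F = ‖F‖ ^ 2 := by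
  rw [mdot_eq_inner, real_inner_self_eq_norm_sq]; rfl

theorem mdot_eq_trace (A B : Matrix (Fin d) (Fin d) ℝ) : mdot A B = (Aᵀ * B).trace := by
  simp only [mdot, trace, diag_apply, mul_apply, transpose_apply]
  exact Finset.sum_comm

theorem mdot_smul_right (c : ℝ) (A B : Matrix (Fin d) (Fin d) ℝ) :
    mdot A (c • B) = c * mdot A B := by
  simp only [mdot, Matrix.smul_apply, smul_eq_mul, Finset.mul_sum]
  exact Finset.sum_congr rfl fun _ _ => Finset.sum_congr rfl fun _ _ => by ring

theorem mdot_smul_left (c : ℝ) (A B : Matrix (Fin d) (Fin d) ℝ) :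
    mdot (c • A) B = c * mdot A B := by
  simp only [mdot, Matrix.smul_apply, smul_eq_mul, Finset.mul_sum]
  exact Finset.sum_congr rfl fun _ _ => Finset.sum_congr rfl fun _ _ => by ring

theorem norm_add_sq_eq (A B : Matrix (Fin d) (Fin d) ℝ) :
    ‖A + B‖ ^ 2 = ‖A‖ ^ 2 + 2 * mdot A B + ‖B‖ ^ 2 := by
  simp only [← mdot_self, mdot, Matrix.add_apply, Finset.mul_sum, ← Finset.sum_add_distrib]
  exact Finset.sum_congr rfl fun _ _ => Finset.sum_congr rfl fun _ _ => by ring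

theorem mdot_mul_transpose_mul_self (F : Matrix (Fin d) (Fin d) ℝ) :
    mdot (F * Fᵀ * F) F = ‖Fᵀ * F‖ ^ 2 := by
  rw [← mdot_self, mdot_eq_trace, mdot_eq_trace]
  simp only [transpose_mul, transpose_transpose, Matrix.mul_assoc]

theorem norm_transpose_mul_self_le (F : Matrix (Fin d) (Fin d) ℝ) : ‖Fᵀ * F‖ ≤ ‖F‖ ^ 2 := by
  simpa [sq] using frobenius_norm_mul Fᵀ F

theorem norm_pow_four_le_card_mul (F : Matrix (Fin d) (Fin d) ℝ) :
    ‖F‖ ^ 4 ≤ d * ‖Fᵀ * F‖ ^ 2 := by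
  have htr : ‖F‖ ^ 2 = mdot 1 (Fᵀ * F) := by
    rw [← mdot_self, mdot_eq_trace, mdot_eq_trace, transpose_one, Matrix.one_mul]
  have hone : ‖(1 : Matrix (Fin d) (Fin d) ℝ)‖ = Real.sqrt d := by
    simpa using congrArg NNReal.toReal (frobenius_nnnorm_one (n := Fin d) (α := ℝ))
  have hcs : ‖F‖ ^ 2 ≤ Real.sqrt d * ‖Fᵀ * F‖ := by
    rw [htr, ← hone]
    exact (le_abs_self _).trans (abs_mdot_le _ _)
  calc ‖F‖ ^ 4 = (‖F‖ ^ 2) ^ 2 := by ring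
    _ ≤ (Real.sqrt d * ‖Fᵀ * F‖) ^ 2 := pow_le_pow_left₀ (by positivity) hcs 2
    _ = d * ‖Fᵀ * F‖ ^ 2 := by rw [mul_pow, Real.sq_sqrt d.cast_nonneg]

noncomputable def svkStress (G L : ℝ) (F : Matrix (Fin d) (Fin d) ℝ) : Matrix (Fin d) (Fin d) ℝ :=
  G • (F * Fᵀ * F) + ((L / 2) * frob F ^ 2) • F

noncomputable def svkObjective (G L : ℝ) (At B F : Matrix (Fin d) (Fin d) ℝ) : ℝ :=
  mdot At F + (1 / (2 * (G + L / 2))) * mdot B (svkStress G L F) - (1 / 4) * frob (Fᵀ * F) ^ 2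

theorem svkh_eq_sSup_range (G L : ℝ) (At B : Matrix (Fin d) (Fin d) ℝ) :
    svkh G L At B = sSup (Set.range (svkObjective G L At B)) := by
  simp only [svkh, Set.range, svkObjective, svkStress, eq_comm]

theorem norm_svkStress_le {G L : ℝ} (hG : 0 < G) (hGL : 0 < G + d * L / 2)
    (F : Matrix (Fin d) (Fin d) ℝ) : ‖svkStress G L F‖ ≤ |G + L / 2| * ‖F‖ ^ 3 := by
  set q := ‖F‖ ^ 2 with hq
  set p := ‖Fᵀ * F‖ ^ 2 with hp
  have hq0 : 0 ≤ q := by positivity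
  have hp0 : 0 ≤ p := by positivity
  have hcube : ‖F * Fᵀ * F‖ ^ 2 ≤ q * p := by
    rw [Matrix.mul_assoc, ← mul_pow]
    exact pow_le_pow_left₀ (norm_nonneg _) (frobenius_norm_mul _ _) 2
  have hpq : p ≤ q ^ 2 :=
    pow_le_pow_left₀ (norm_nonneg _) (norm_transpose_mul_self_le F) 2
  have hqp : q ^ 2 ≤ d * p := by
    rw [← pow_mul]; exact norm_pow_four_le_card_mul F
  have hexpand : ‖svkStress G L F‖ ^ 2 =
      G ^ 2 * ‖F * Fᵀ * F‖ ^ 2 + G * L * (q * p) + (L / 2) ^ 2 * q ^ 3 := by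
    rw [svkStress, frob_eq_norm, norm_add_sq_eq, norm_smul, norm_smul, mdot_smul_right,
      mdot_smul_left, mdot_mul_transpose_mul_self, Real.norm_eq_abs, Real.norm_eq_abs]
    simp only [mul_pow, sq_abs, ← hq, ← hp]; ring
  -- For `d ≥ 2` the hypothesis forces `G + L > 0`; for `d = 1` one has `p = q ^ 2`.
  have hcoef : G * (G + L) * (q * p) ≤ G * (G + L) * q ^ 3 := by
    rcases le_or_gt 0 (G + L) with hGL' | hGL'
    · have : q * p ≤ q ^ 3 := by nlinarith
      exact mul_le_mul_of_nonneg_left this (by positivity)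
    · have hd : (d : ℝ) ≤ 1 := by
        by_contra! h
        have : (2 : ℝ) ≤ d := by exact_mod_cast (show 2 ≤ d by exact_mod_cast h)
        nlinarith
      have : p = q ^ 2 := le_antisymm hpq (hqp.trans (by nlinarith))
      rw [this, ← pow_succ']
  rw [← sq_le_sq₀ (norm_nonneg _) (by positivity), hexpand, mul_pow, sq_abs]
  nlinarith [mul_le_mul_of_nonneg_left hcube (sq_nonneg G)]

theorem abs_svk_coupling_le {G L : ℝ} (hG : 0 < G) (hGL : 0 < G + d * L / 2)
    (B F : Matrix (Fin d) (Fin d) ℝ) :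
    |1 / (2 * (G + L / 2)) * mdot B (svkStress G L F)| ≤ ‖B‖ * ‖F‖ ^ 3 / 2 := by
  set k := G + L / 2
  have hk : |1 / (2 * k)| * |k| ≤ 1 / 2 := by
    rw [← abs_mul]
    rcases eq_or_ne k 0 with h | h
    · simp [h]
    · rw [one_div_mul_eq_div, div_mul_cancel_right₀ h]; norm_num
  calc |1 / (2 * k) * mdot B (svkStress G L F)|
      ≤ |1 / (2 * k)| * (‖B‖ * (|k| * ‖F‖ ^ 3)) := by
        rw [abs_mul]
        gcongr
        exact (abs_mdot_le _ _).trans (by gcongr; exact norm_svkStress_le hG hGL F)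
    _ = |1 / (2 * k)| * |k| * (‖B‖ * ‖F‖ ^ 3) := by ring
    _ ≤ 1 / 2 * (‖B‖ * ‖F‖ ^ 3) := by gcongr
    _ = ‖B‖ * ‖F‖ ^ 3 / 2 := by ring

theorem svkObjective_le {G L : ℝ} (hG : 0 < G) (hGL : 0 < G + d * L / 2)
    (At B F : Matrix (Fin d) (Fin d) ℝ) :
    svkObjective G L At B F ≤
      ‖At‖ * ‖F‖ + ‖B‖ / 2 * ‖F‖ ^ 3 - 1 / (4 * (d + 1)) * ‖F‖ ^ 4 := by
  have hquart : ‖F‖ ^ 4 ≤ (d + 1) * ‖Fᵀ * F‖ ^ 2 := by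
    nlinarith [norm_pow_four_le_card_mul F, sq_nonneg ‖Fᵀ * F‖]
  have hquart' : 1 / (4 * (d + 1)) * ‖F‖ ^ 4 ≤ 1 / 4 * ‖Fᵀ * F‖ ^ 2 := by
    rw [div_mul_eq_mul_div, div_le_iff₀ (by positivity)]
    nlinarith
  have hlin := (le_abs_self _).trans (abs_mdot_le At F)
  have hcub := (le_abs_self _).trans (abs_svk_coupling_le hG hGL B F)
  rw [svkObjective, frob_eq_norm]
  linarith

theorem le_svkObjective {G L : ℝ} (hG : 0 < G) (hGL : 0 < G + d * L / 2)
    (At B F : Matrix (Fin d) (Fin d) ℝ) :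
    mdot At F - ‖B‖ / 2 * ‖F‖ ^ 3 - 1 / 4 * ‖F‖ ^ 4 ≤ svkObjective G L At B F := by
  have hcub := neg_le_of_abs_le (abs_svk_coupling_le hG hGL B F)
  have hquart : ‖Fᵀ * F‖ ^ 2 ≤ ‖F‖ ^ 4 := by
    rw [show 4 = 2 * 2 from rfl, pow_mul]
    exact pow_le_pow_left₀ (norm_nonneg _) (norm_transpose_mul_self_le F) 2
  rw [svkObjective, frob_eq_norm]
  linarith

theorem bddAbove_range_svkObjective {G L : ℝ} (hG : 0 < G) (hGL : 0 < G + d * L / 2)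
    (At B : Matrix (Fin d) (Fin d) ℝ) : BddAbove (Set.range (svkObjective G L At B)) := by
  obtain ⟨M, hM⟩ := exists_add_cubic_sub_quartic_le (norm_nonneg At)
    (by positivity : 0 ≤ ‖B‖ / 2) (by positivity : (0 : ℝ) < 1 / (4 * (d + 1)))
  refine ⟨M, ?_⟩
  rintro _ ⟨F, rfl⟩
  exact (svkObjective_le hG hGL At B F).trans (hM _ (norm_nonneg F))

theorem le_svkObjective_rpow_smul {G L : ℝ} (hG : 0 < G) (hGL : 0 < G + d * L / 2)
    (At B : Matrix (Fin d) (Fin d) ℝ) (hB : frob B ^ 3 ≤ (27 / 8 ^ 3) * frob At) :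
    (3 / 16) * (frob At ^ ((4 : ℝ) / 3) + frob B ^ 4) ≤
      svkObjective G L At B (frob At ^ (-(2 : ℝ) / 3) • At) := by
  rw [frob_eq_norm, frob_eq_norm] at hB ⊢
  set a := ‖At‖ with ha
  set b := ‖B‖
  have ha0 : 0 ≤ a := norm_nonneg At
  set u := a ^ ((1 : ℝ) / 3)
  have hu0 : 0 ≤ u := Real.rpow_nonneg ha0 _
  have hu3 : u ^ 3 = a := by
    rw [← Real.rpow_natCast, ← Real.rpow_mul ha0]; norm_num
  have hu4 : a ^ ((4 : ℝ) / 3) = u ^ 4 := by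
    rw [← Real.rpow_natCast, ← Real.rpow_mul ha0]; norm_num
  have hscale : a ^ (-(2 : ℝ) / 3) * a = u := by
    rw [← Real.rpow_add_one' ha0 (by norm_num)]; norm_num [u]
  have hnorm : ‖a ^ (-(2 : ℝ) / 3) • At‖ = u := by
    rw [norm_smul, Real.norm_eq_abs, abs_of_nonneg (Real.rpow_nonneg ha0 _), ← ha, hscale]
  have hdot : mdot At (a ^ (-(2 : ℝ) / 3) • At) = u ^ 4 := by
    rw [mdot_smul_right, mdot_self, ← ha, sq, ← mul_assoc, hscale, ← hu3]; ring
  have hbu : b ≤ 3 / 8 * u := by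
    refine le_of_pow_le_pow_left₀ three_ne_zero (by positivity) ?_
    rw [← hu3] at hB
    linarith
  have hobj := le_svkObjective hG hGL At B (a ^ (-(2 : ℝ) / 3) • At)
  rw [hnorm, hdot] at hobj
  have hb0 : 0 ≤ b := norm_nonneg B
  rw [hu4]
  nlinarith [mul_le_mul_of_nonneg_right hbu (pow_nonneg hu0 3), pow_le_pow_left₀ hb0 hbu 4]

end Frobenius

theorem svkh_lower_bound_small_B {d : ℕ} (G L : ℝ)
    (hG : 0 < G) (hGL : 0 < G + d * L / 2)
    (At B : Matrix (Fin d) (Fin d) ℝ)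
    (hB : frob B ^ 3 ≤ (27 / 8 ^ 3) * frob At) :
    (3/16) * (frob At ^ ((4:ℝ)/3) + frob B ^ 4) ≤ svkh G L At B := by
  rw [svkh_eq_sSup_range]
  exact (le_svkObjective_rpow_smul hG hGL At B hB).trans
    (le_csSup (bddAbove_range_svkObjective hG hGL At B) ⟨_, rfl⟩)
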